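/- (Sufficient condition for K-resilience) Fix N ≥ 2 and K ≥ 0. Suppose that for every A ⊆ P with |A| = K and every E ⊆ P with |E| ≤ K, the kernel of the extended linear map T_{E,A} has dimension |E ∩ A|. Then the N-node system is K-resilient: for every A ⊆ P with |A| = K, every e : P → ℝ supported on A with e p ≠ 0 for all p ∈ A, and every δ : Fin N → ℝ with δ 0 = 0, setting b = D δ + e, (i) for every E ⊆ P with |E| < K the equation system for (E, b) has no solution; (ii) the equation system for (A, b) has exactly one solution, namely (δ, e); (iii) for every E ⊆ P with |E| = K and E ≠ A the equation system for (E, b) has no solution. -/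
import Mathlib


abbrev Pair (N : ℕ) := {p : Fin N × Fin N // p.2 < p.1}

def Dmap {N : ℕ} (δ : Fin N → ℝ) : Pair N → ℝ := fun p => δ p.1.1 - δ p.1.2

def ind {N : ℕ} (a : Pair N) : Pair N → ℝ := fun p => if p = a then 1 else 0

def IsSolution {N : ℕ} (hN : 0 < N) (E : Set (Pair N)) (b : Pair N → ℝ)
    (dh : Fin N → ℝ) (eh : Pair N → ℝ) : Prop :=
  dh ⟨0, hN⟩ = 0 ∧ (∀ p ∉ E, eh p = 0) ∧ ∀ p, Dmap dh p + eh p = b p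

/-- The ambient linear map `(dh, eh, e') ↦ D dh + eh - e'`. -/
def Lfull (N : ℕ) : ((Fin N → ℝ) × (Pair N → ℝ) × (Pair N → ℝ)) →ₗ[ℝ] (Pair N → ℝ) where
  toFun x := fun p => (x.1 p.1.1 - x.1 p.1.2) + x.2.1 p - x.2.2 p
  map_add' x y := by funext p; simp; ring
  map_smul' c x := by funext p; simp; ring

/-- The domain of the extended (re-vectorized) map: triples `(dh, eh, e')` with
`dh 0 = 0`, `eh` supported on `E`, `e'` supported on `A`. -/
noncomputable def Dom {N : ℕ} (hN : 0 < N) (E A : Set (Pair N)) :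
    Submodule ℝ ((Fin N → ℝ) × (Pair N → ℝ) × (Pair N → ℝ)) where
  carrier := {x | x.1 ⟨0, hN⟩ = 0 ∧ (∀ p ∉ E, x.2.1 p = 0) ∧ (∀ p ∉ A, x.2.2 p = 0)}
  add_mem' := by
    rintro a b ⟨ha0, ha1, ha2⟩ ⟨hb0, hb1, hb2⟩
    refine ⟨by simp [ha0, hb0], fun p hp => by simp [ha1 p hp, hb1 p hp],
      fun p hp => by simp [ha2 p hp, hb2 p hp]⟩
  zero_mem' := ⟨rfl, fun p _ => rfl, fun p _ => rfl⟩
  smul_mem' := by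
    rintro c a ⟨ha0, ha1, ha2⟩
    refine ⟨by simp [ha0], fun p hp => by simp [ha1 p hp], fun p hp => by simp [ha2 p hp]⟩

/-- The extended (re-vectorized) linear map `T_{E,A} (dh, eh, e') = D dh + eh - e'`. -/
noncomputable def Tmap {N : ℕ} (hN : 0 < N) (E A : Set (Pair N)) :
    Dom hN E A →ₗ[ℝ] (Pair N → ℝ) := (Lfull N).comp (Dom hN E A).subtype


set_option synthInstance.maxHeartbeats 1000000 in
set_option maxHeartbeats 1000000 in
lemma ker_struct {N : ℕ} (hN : 0 < N) (E A : Set (Pair N))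
    (hdim : Module.finrank ℝ (LinearMap.ker (Tmap hN E A)) = (E ∩ A).ncard)
    (x : Dom hN E A) (hx : x ∈ LinearMap.ker (Tmap hN E A)) :
    (x : (Fin N → ℝ) × (Pair N → ℝ) × (Pair N → ℝ)).1 = 0 ∧
    (x : (Fin N → ℝ) × (Pair N → ℝ) × (Pair N → ℝ)).2.1 =
    (x : (Fin N → ℝ) × (Pair N → ℝ) × (Pair N → ℝ)).2.2 := by
  classical
  set V := (Fin N → ℝ) × (Pair N → ℝ) × (Pair N → ℝ) with hV
  set w : ↑(E ∩ A) → V := fun s => (0, ind (s : Pair N), ind (s : Pair N)) with hw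
  set π1 : V →ₗ[ℝ] (Fin N → ℝ) := LinearMap.fst ℝ (Fin N → ℝ) ((Pair N → ℝ) × (Pair N → ℝ))
    with hπ1
  set π2 : V →ₗ[ℝ] (Pair N → ℝ) :=
    (LinearMap.fst ℝ (Pair N → ℝ) (Pair N → ℝ)).comp
      (LinearMap.snd ℝ (Fin N → ℝ) ((Pair N → ℝ) × (Pair N → ℝ))) with hπ2
  set π3 : V →ₗ[ℝ] (Pair N → ℝ) :=
    (LinearMap.snd ℝ (Pair N → ℝ) (Pair N → ℝ)).comp
      (LinearMap.snd ℝ (Fin N → ℝ) ((Pair N → ℝ) × (Pair N → ℝ))) with hπ3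
  have hw_indep : LinearIndependent ℝ w := by
    apply LinearIndependent.of_comp π2
    have heq : (π2 ∘ w) = (⇑(Pi.basisFun ℝ (Pair N)) ∘ (Subtype.val : ↑(E ∩ A) → Pair N)) := by
      funext s
      rw [Function.comp_apply, Function.comp_apply, Pi.basisFun_apply]
      show ind (s : Pair N) = _
      funext p
      simp [ind, Pi.single_apply]
    rw [heq]
    exact ((Pi.basisFun ℝ (Pair N)).linearIndependent).comp Subtype.val Subtype.val_injective
  -- the image of the kernel in the ambient space
  set K' : Submodule ℝ V := (LinearMap.ker (Tmap hN E A)).map (Dom hN E A).subtype with hK'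
  have hwK : ∀ s : ↑(E ∩ A), w s ∈ K' := by
    intro s
    have hmem : w s ∈ Dom hN E A := by
      refine ⟨rfl, fun p hp => ?_, fun p hp => ?_⟩
      · have hne : p ≠ (s : Pair N) := fun hps => hp (hps ▸ s.2.1)
        show ind (s : Pair N) p = 0
        simp [ind, hne]
      · have hne : p ≠ (s : Pair N) := fun hps => hp (hps ▸ s.2.2)
        show ind (s : Pair N) p = 0
        simp [ind, hne]
    refine ⟨⟨w s, hmem⟩, ?_, rfl⟩
    show Tmap hN E A ⟨w s, hmem⟩ = 0
    funext p
    simp [Tmap, Lfull, hw]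
  have hle : Submodule.span ℝ (Set.range w) ≤ K' := by
    rw [Submodule.span_le]
    rintro _ ⟨s, rfl⟩
    exact hwK s
  have hrank1 : Module.finrank ℝ (Submodule.span ℝ (Set.range w)) = Fintype.card ↑(E ∩ A) :=
    finrank_span_eq_card hw_indep
  have hrank2 : Module.finrank ℝ K' = Fintype.card ↑(E ∩ A) := by
    rw [hK', Submodule.finrank_map_subtype_eq, hdim, Set.ncard_eq_toFinset_card',
      Set.toFinset_card]
  have hspan : Submodule.span ℝ (Set.range w) = K' :=
    Submodule.eq_of_le_of_finrank_eq hle (hrank1.trans hrank2.symm)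
  have hxK : (x : V) ∈ K' := ⟨x, hx, rfl⟩
  rw [← hspan] at hxK
  obtain ⟨c, hc⟩ := (Submodule.mem_span_range_iff_exists_fun ℝ).mp hxK
  constructor
  · have h1 := congrArg π1 hc
    rw [map_sum] at h1
    simp only [map_smul] at h1
    have e1 : ∀ s : ↑(E ∩ A), π1 (w s) = 0 := fun s => rfl
    simp only [e1, smul_zero, Finset.sum_const_zero] at h1
    exact h1.symm
  · have h2 := congrArg π2 hc
    have h3 := congrArg π3 hc
    rw [map_sum] at h2 h3
    simp only [map_smul] at h2 h3
    have e23 : ∀ s : ↑(E ∩ A), π2 (w s) = π3 (w s) := fun s => rfl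
    simp only [e23] at h2
    exact h2.symm.trans h3

set_option synthInstance.maxHeartbeats 1000000 in
set_option maxHeartbeats 1000000 in
/-- Sufficient condition for `K`-resilience. -/
theorem stmt_12 {N : ℕ} (hN : 2 ≤ N) (K : ℕ)
    (h : ∀ A E : Set (Pair N), A.ncard = K → E.ncard ≤ K →
      Module.finrank ℝ
        (LinearMap.ker (Tmap (show 0 < N by omega) E A)) = (E ∩ A).ncard) :
    ∀ A : Set (Pair N), A.ncard = K →
    ∀ e : Pair N → ℝ, (∀ p ∉ A, e p = 0) → (∀ p ∈ A, e p ≠ 0) →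
    ∀ δ : Fin N → ℝ, δ ⟨0, by omega⟩ = 0 →
      (∀ E : Set (Pair N), E.ncard < K →
        ¬ ∃ (dh : Fin N → ℝ) (eh : Pair N → ℝ),
          IsSolution (show 0 < N by omega) E (fun p => Dmap δ p + e p) dh eh) ∧
      (∀ (dh : Fin N → ℝ) (eh : Pair N → ℝ),
        IsSolution (show 0 < N by omega) A (fun p => Dmap δ p + e p) dh eh ↔
          dh = δ ∧ eh = e) ∧
      (∀ E : Set (Pair N), E.ncard = K → E ≠ A →
        ¬ ∃ (dh : Fin N → ℝ) (eh : Pair N → ℝ),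
          IsSolution (show 0 < N by omega) E (fun p => Dmap δ p + e p) dh eh) := by
  intro A hA e hesupp hene δ hδ0
  have h0 : 0 < N := by omega
  have key : ∀ E : Set (Pair N), E.ncard ≤ K →
      ∀ dh eh, IsSolution h0 E (fun p => Dmap δ p + e p) dh eh →
      dh = δ ∧ eh = e := by
    intro E hE dh eh hsol
    obtain ⟨hdh0, hehsupp, heq⟩ := hsol
    have hdom : ((dh - δ, eh, e) : (Fin N → ℝ) × (Pair N → ℝ) × (Pair N → ℝ)) ∈
        Dom h0 E A := by
      refine ⟨?_, hehsupp, hesupp⟩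
      show dh ⟨0, h0⟩ - δ ⟨0, h0⟩ = 0
      rw [hdh0, hδ0, sub_zero]
    have hker : (⟨(dh - δ, eh, e), hdom⟩ : Dom h0 E A) ∈ LinearMap.ker (Tmap h0 E A) := by
      show Tmap h0 E A ⟨(dh - δ, eh, e), hdom⟩ = 0
      funext p
      have hp := heq p
      simp only [Dmap] at hp
      show ((dh - δ) p.1.1 - (dh - δ) p.1.2) + eh p - e p = 0
      simp only [Pi.sub_apply]
      linarith
    obtain ⟨hz, hee⟩ := ker_struct h0 E A (h A E hA hE) _ hker
    refine ⟨?_, hee⟩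
    have : dh - δ = 0 := hz
    exact sub_eq_zero.mp this
  refine ⟨?_, ?_, ?_⟩
  · intro E hE ⟨dh, eh, hsol⟩
    obtain ⟨hd, he'⟩ := key E (le_of_lt hE) dh eh hsol
    have hsub : A ⊆ E := by
      intro p hpA
      by_contra hpE
      exact hene p hpA (he' ▸ hsol.2.1 p hpE)
    have := Set.ncard_le_ncard hsub (Set.toFinite E)
    omega
  · intro dh eh
    constructor
    · exact key A (le_of_eq hA) dh eh
    · rintro ⟨rfl, rfl⟩
      exact ⟨hδ0, hesupp, fun p => rfl⟩
  · intro E hE hEA ⟨dh, eh, hsol⟩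
    obtain ⟨hd, he'⟩ := key E (le_of_eq hE) dh eh hsol
    have hsub : A ⊆ E := by
      intro p hpA
      by_contra hpE
      exact hene p hpA (he' ▸ hsol.2.1 p hpE)
    exact hEA (Set.eq_of_subset_of_ncard_le hsub (by omega) (Set.toFinite E)).symm
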